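/- arXiv:1411.3870 — 2 statements merged into one kernel-verified Lean document; each statement's English description precedes it below -/
import Mathlib

section
/- Let N be an even positive integer and l an odd integer with 0 < l < N, and let A^{N,l} = (A_yes^{N,l}, A_no^{N,l}) be the promise problem over the unary alphabet {a} with A_yes^{N,l} = {a^{iN} : i ≥ 0} and A_no^{N,l} = {a^{iN+l} : i ≥ 0}. Then s(A_yes^{N,l}) = N and s(A_no^{N,l}) = N, but ss(A^{N,l}) = 2; in particular ss(A) can be much smaller than both s(A_yes) and s(A_no). -/
/-- The extended transition function `δ̂`: run a finite automaton's transition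
function on a whole word. -/
def evalWord {α : Type} {n : ℕ} (δ : Fin n → α → Fin n) (s : Fin n) (w : List α) : Fin n :=
  w.foldl δ s

/-- A promise version deterministic finite automaton (pvDFA) over the
alphabet `α`, with (finite) state set `Fin n`, transition function `step`,
initial state `start`, and disjoint sets of accepting and rejecting states. -/
structure PVDFA (α : Type) (n : ℕ) where
  step : Fin n → α → Fin n
  start : Fin n
  accept : Finset (Fin n)
  reject : Finset (Fin n)
  disj : Disjoint accept reject

namespace PVDFA

/-- The state reached by the pvDFA after reading the word `w`. -/
def eval {α : Type} {n : ℕ} (M : PVDFA α n) (w : List α) : Fin n :=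
  evalWord M.step M.start w

/-- A pvDFA recognizes the promise problem `(Ayes, Ano)`: for every word `w`,
`w ∈ Ayes` iff the reached state is accepting, and `w ∈ Ano` iff it is rejecting. -/
def Recognizes {α : Type} {n : ℕ} (M : PVDFA α n) (Ayes Ano : Set (List α)) : Prop :=
  (∀ w, w ∈ Ayes ↔ M.eval w ∈ M.accept) ∧ (∀ w, w ∈ Ano ↔ M.eval w ∈ M.reject)

/-- A pvDFA solves the promise problem `(Ayes, Ano)`: every `w ∈ Ayes` leads to an
accepting state and every `w ∈ Ano` leads to a rejecting state. -/
def Solves {α : Type} {n : ℕ} (M : PVDFA α n) (Ayes Ano : Set (List α)) : Prop :=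
  (∀ w ∈ Ayes, M.eval w ∈ M.accept) ∧ (∀ w ∈ Ano, M.eval w ∈ M.reject)

end PVDFA

/-- `s(L)`: the minimal number of states of a DFA recognizing the language `L`. -/
noncomputable def dfaSize {α : Type} (L : Set (List α)) : ℕ :=
  sInf {n : ℕ | ∃ (δ : Fin n → α → Fin n) (s₀ : Fin n) (F : Finset (Fin n)),
    ∀ w, w ∈ L ↔ evalWord δ s₀ w ∈ F}

/-- `sr(A)`: the minimal number of states of a pvDFA recognizing the promise
problem `(Ayes, Ano)`. -/
noncomputable def srSize {α : Type} (Ayes Ano : Set (List α)) : ℕ :=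
  sInf {n : ℕ | ∃ M : PVDFA α n, M.Recognizes Ayes Ano}

/-- `ss(A)`: the minimal number of states of a pvDFA solving the promise
problem `(Ayes, Ano)`. -/
noncomputable def ssSize {α : Type} (Ayes Ano : Set (List α)) : ℕ :=
  sInf {n : ℕ | ∃ M : PVDFA α n, M.Solves Ayes Ano}

/-! A DFA for a residue class of word lengths modulo `N` needs `N` states, since the words
`a ^ 0, …, a ^ (N - 1)` are pairwise distinguished by a suffix `a ^ t`, so they must reach distinct
states. Promising that the input lies in one of the residue classes `0` or `l`, however, only
leaves the parity of the length to check when `N` is even and `l` odd, which a two-state counter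
does. -/

open Fin.NatCast

theorem evalWord_append {α : Type} {n : ℕ} (δ : Fin n → α → Fin n) (s : Fin n) (u v : List α) :
    evalWord δ s (u ++ v) = evalWord δ (evalWord δ s u) v :=
  List.foldl_append

theorem mem_append_iff_of_evalWord_eq {α : Type} {n : ℕ} {L : Set (List α)}
    {δ : Fin n → α → Fin n} {s₀ : Fin n} {F : Finset (Fin n)}
    (hL : ∀ w, w ∈ L ↔ evalWord δ s₀ w ∈ F) {u v : List α}
    (huv : evalWord δ s₀ u = evalWord δ s₀ v) (t : List α) :
    u ++ t ∈ L ↔ v ++ t ∈ L := by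
  rw [hL, hL, evalWord_append, evalWord_append, huv]

theorem card_le_of_pairwise_distinguishable {α ι : Type} [Fintype ι] {L : Set (List α)}
    (w : ι → List α) (hw : Pairwise fun i j => ∃ t, w i ++ t ∈ L ∧ w j ++ t ∉ L)
    {n : ℕ} {δ : Fin n → α → Fin n} {s₀ : Fin n} {F : Finset (Fin n)}
    (hL : ∀ x, x ∈ L ↔ evalWord δ s₀ x ∈ F) : Fintype.card ι ≤ n := by
  have hinj : Function.Injective fun i => evalWord δ s₀ (w i) := by
    intro i j hij
    by_contra hne
    obtain ⟨t, hi, hj⟩ := hw hne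
    exact hj ((mem_append_iff_of_evalWord_eq hL hij t).mp hi)
  simpa using Fintype.card_le_of_injective _ hinj

theorem evalWord_add_one {α : Type} {n : ℕ} [NeZero n] (s : Fin n) (w : List α) :
    evalWord (fun t _ => t + 1) s w = s + w.length := by
  induction w generalizing s with
  | nil => simp [evalWord]
  | cons a w ih =>
    rw [List.length_cons, Nat.cast_succ, add_comm _ (1 : Fin n), ← add_assoc]
    exact ih (s + 1)

theorem exists_add_mod_eq_and_add_mod_ne {N r j k : ℕ} (hr : r < N) (hj : j < N) (hk : k < N)
    (hjk : j ≠ k) : ∃ t, (j + t) % N = r ∧ (k + t) % N ≠ r := by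
  have hjt : (j + (N - j + r)) % N = r := by
    rw [show j + (N - j + r) = r + N by omega, Nat.add_mod_right, Nat.mod_eq_of_lt hr]
  exact ⟨N - j + r, hjt, fun hkt =>
    hjk ((Nat.ModEq.add_right_cancel' _ (hjt.trans hkt.symm)).eq_of_lt_of_lt hj hk)⟩

theorem dfaSize_setOf_length_mod {α : Type} [Nonempty α] {N r : ℕ} (hr : r < N) :
    dfaSize {w : List α | w.length % N = r} = N := by
  have : NeZero N := ⟨by omega⟩
  refine IsLeast.csInf_eq ⟨⟨fun t _ => t + 1, 0, {(r : Fin N)}, fun w => ?_⟩, ?_⟩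
  · rw [evalWord_add_one, zero_add, Finset.mem_singleton, Fin.ext_iff, Fin.val_natCast,
      Fin.val_natCast, Nat.mod_eq_of_lt hr]
    rfl
  · rintro n ⟨δ, s₀, F, hL⟩
    obtain ⟨a⟩ := ‹Nonempty α›
    have hdist : Pairwise fun j k : Fin N =>
        ∃ t, List.replicate j a ++ t ∈ {w : List α | w.length % N = r} ∧
          List.replicate k a ++ t ∉ {w : List α | w.length % N = r} := by
      intro j k hjk
      obtain ⟨t, hj, hk⟩ := exists_add_mod_eq_and_add_mod_ne hr j.isLt k.isLt (Fin.val_ne_of_ne hjk)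
      exact ⟨List.replicate t a, by simpa using hj, by simpa using hk⟩
    simpa using card_le_of_pairwise_distinguishable _ hdist hL

theorem setOf_replicate_mul_add_eq {N r : ℕ} (hr : r < N) :
    {w : List Unit | ∃ i : ℕ, w = List.replicate (i * N + r) ()} = {w | w.length % N = r} := by
  ext w
  constructor
  · rintro ⟨i, rfl⟩
    simp [Nat.mod_eq_of_lt hr]
  · intro h
    exact ⟨w.length / N, List.eq_replicate_iff.mpr ⟨by rw [← h, Nat.div_add_mod'], fun _ _ => rfl⟩⟩

def parityPVDFA (α : Type) : PVDFA α 2 :=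
  ⟨fun s _ => s + 1, 0, {0}, {1}, by decide⟩

theorem parityPVDFA_solves {α : Type} {Ayes Ano : Set (List α)}
    (hyes : ∀ w ∈ Ayes, Even w.length) (hno : ∀ w ∈ Ano, Odd w.length) :
    (parityPVDFA α).Solves Ayes Ano := by
  constructor
  · intro w hw
    simp [PVDFA.eval, parityPVDFA, evalWord_add_one, Fin.ext_iff, Nat.even_iff.mp (hyes w hw)]
  · intro w hw
    simp [PVDFA.eval, parityPVDFA, evalWord_add_one, Fin.ext_iff, Nat.odd_iff.mp (hno w hw)]

theorem two_le_of_solves {α : Type} {n : ℕ} {Ayes Ano : Set (List α)} {M : PVDFA α n}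
    (hM : M.Solves Ayes Ano) {u v : List α} (hu : u ∈ Ayes) (hv : v ∈ Ano) : 2 ≤ n := by
  have hne : M.eval u ≠ M.eval v := fun h =>
    Finset.disjoint_left.mp M.disj (hM.1 u hu) (h ▸ hM.2 v hv)
  have h := Fintype.one_lt_card_iff.mpr ⟨_, _, hne⟩
  rwa [Fintype.card_fin] at h

theorem ssSize_eq_two {α : Type} {Ayes Ano : Set (List α)}
    (hyes : ∀ w ∈ Ayes, Even w.length) (hno : ∀ w ∈ Ano, Odd w.length)
    {u v : List α} (hu : u ∈ Ayes) (hv : v ∈ Ano) : ssSize Ayes Ano = 2 :=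
  IsLeast.csInf_eq ⟨⟨parityPVDFA α, parityPVDFA_solves hyes hno⟩,
    fun _ ⟨_, hM⟩ => two_le_of_solves hM hu hv⟩

theorem ss_can_be_small_general (N l : ℕ) (hNeven : Even N)
    (hlodd : Odd l) (hlN : l < N) :
    dfaSize {w : List Unit | ∃ i : ℕ, w = List.replicate (i * N) ()} = N ∧
    dfaSize {w : List Unit | ∃ i : ℕ, w = List.replicate (i * N + l) ()} = N ∧
    ssSize {w : List Unit | ∃ i : ℕ, w = List.replicate (i * N) ()}
           {w : List Unit | ∃ i : ℕ, w = List.replicate (i * N + l) ()} = 2 := by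
  have hN : 0 < N := by omega
  have hyes := setOf_replicate_mul_add_eq hN
  simp only [add_zero] at hyes
  refine ⟨?_, ?_, ?_⟩
  · rw [hyes, dfaSize_setOf_length_mod hN]
  · rw [setOf_replicate_mul_add_eq hlN, dfaSize_setOf_length_mod hlN]
  · refine ssSize_eq_two ?_ ?_ (u := []) (v := List.replicate l ()) ⟨0, by simp⟩ ⟨0, by simp⟩
    · rintro _ ⟨i, rfl⟩
      simpa using hNeven.mul_left i
    · rintro _ ⟨i, rfl⟩
      simpa using (hNeven.mul_left i).add_odd hlodd

/-- for an even positive integer `N` and an odd `l` with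
`0 < l < N`, the promise problem `A^{N,l} = ({a^{iN}}, {a^{iN+l}})` over the
unary alphabet satisfies `s(A_yes) = N`, `s(A_no) = N`, but `ss(A^{N,l}) = 2`. -/
theorem ss_can_be_small (N l : ℕ) (hNpos : 0 < N) (hNeven : Even N)
    (hlodd : Odd l) (hl : 0 < l) (hlN : l < N) :
    dfaSize {w : List Unit | ∃ i : ℕ, w = List.replicate (i * N) ()} = N ∧
    dfaSize {w : List Unit | ∃ i : ℕ, w = List.replicate (i * N + l) ()} = N ∧
    ssSize {w : List Unit | ∃ i : ℕ, w = List.replicate (i * N) ()}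
           {w : List Unit | ∃ i : ℕ, w = List.replicate (i * N + l) ()} = 2 :=
  ss_can_be_small_general N l hNeven hlodd hlN
end

section
/- Let p ≥ 6 be an integer, θ = π/p, and let A(p) = (A_yes(p), A_no(p)) be the promise problem over the unary alphabet {a} with A_yes(p) = {a^k : cos²((k mod p)·θ) ≥ 2/3} and A_no(p) = {a^k : cos²((k mod p)·θ) ≤ 1/3}. Then A(p) can be solved with error probability ε = 1/3 by an MO-1QFA with two quantum basis states, but A(p) cannot be solved exactly (with error probability 0) by any MO-1QFA with two quantum basis states. -/
/-- The first standard basis vector `e₀` of `ℂⁿ`, the initial quantum state. -/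
def qInit (n : ℕ) : Fin n → ℂ := fun i => if i.val = 0 then 1 else 0

/-- Accepting probability of an MO-1QFA over the unary alphabet `{a}` (with
end-marker unitaries `Uc`, `Ud`, symbol unitary `Ua` and accepting basis states
`Qa`) on the input word `a^k`: `‖P_acc · U_$ · U_a^k · U_¢ · e₀‖²`. -/
noncomputable def moAcc {n : ℕ} (Uc Ua Ud : Matrix (Fin n) (Fin n) ℂ)
    (Qa : Finset (Fin n)) (k : ℕ) : ℝ :=
  ∑ i ∈ Qa, ‖((Ud * Ua ^ k * Uc).mulVec (qInit n)) i‖ ^ 2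

/-- An MO-1QFA with `n` quantum basis states over the unary alphabet solves the
promise problem `(Ayes, Ano)` with error probability `ε`: each yes-instance is
accepted with probability `≥ 1 − ε` and each no-instance is rejected with
probability `≥ 1 − ε`. -/
def MOSolves (n : ℕ) (Ayes Ano : Set (List Unit)) (ε : ℝ) : Prop :=
  ∃ (Uc Ua Ud : Matrix (Fin n) (Fin n) ℂ),
    Uc ∈ Matrix.unitaryGroup (Fin n) ℂ ∧
    Ua ∈ Matrix.unitaryGroup (Fin n) ℂ ∧
    Ud ∈ Matrix.unitaryGroup (Fin n) ℂ ∧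
    ∃ (Qa : Finset (Fin n)),
      (∀ w ∈ Ayes, 1 - ε ≤ moAcc Uc Ua Ud Qa w.length) ∧
      (∀ w ∈ Ano, 1 - ε ≤ 1 - moAcc Uc Ua Ud Qa w.length)

/-- `A_yes(p) = {a^k : cos²((k mod p)·π/p) ≥ 2/3}`. -/
def AyesP (p : ℕ) : Set (List Unit) :=
  {w | (2 : ℝ) / 3 ≤ Real.cos ((w.length % p : ℕ) * (Real.pi / p)) ^ 2}

/-- `A_no(p) = {a^k : cos²((k mod p)·π/p) ≤ 1/3}`. -/
def AnoP (p : ℕ) : Set (List Unit) :=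
  {w | Real.cos ((w.length % p : ℕ) * (Real.pi / p)) ^ 2 ≤ (1 : ℝ) / 3}

/-! Rotating the plane by `π / p` and accepting on the first basis state accepts `a^k` with
probability `cos² (k π / p)`, which solves `A(p)` with error `1/3`.

Exactness fails: if a two-state automaton accepts `a⁰` and `a¹` with certainty, then for every
rejecting basis state `j` both `x = U_¢ e₀` and `U_a x` lie in the kernel `L` of the `j`-th row of
`U_$`. In `ℂ²` either `L = ℂ²` or `L` is a line, in which case `x` (if nonzero) is an eigenvector
of `U_a`; either way every `U_a^k x` lies in `L`, so every word is accepted with certainty,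
including the no-instance `a^(p/2)`. -/

open Matrix Module

noncomputable def planeRotation (φ : ℝ) : Matrix (Fin 2) (Fin 2) ℂ :=
  !![(Real.cos φ : ℂ), -(Real.sin φ : ℂ); (Real.sin φ : ℂ), (Real.cos φ : ℂ)]

lemma planeRotation_mul (φ ψ : ℝ) :
    planeRotation φ * planeRotation ψ = planeRotation (φ + ψ) := by
  simp only [planeRotation, mul_fin_two, Real.cos_add, Real.sin_add]
  push_cast
  ring_nf

lemma planeRotation_zero : planeRotation 0 = 1 := by
  simp [planeRotation, one_fin_two]

lemma star_planeRotation (φ : ℝ) : star (planeRotation φ) = planeRotation (-φ) := by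
  ext i j
  fin_cases i <;> fin_cases j <;>
    simp [planeRotation, ← Complex.cos_conj, ← Complex.sin_conj]

lemma planeRotation_mem_unitaryGroup (φ : ℝ) :
    planeRotation φ ∈ unitaryGroup (Fin 2) ℂ := by
  rw [mem_unitaryGroup_iff, star_planeRotation, planeRotation_mul, add_neg_cancel,
    planeRotation_zero]

lemma planeRotation_pow (φ : ℝ) (k : ℕ) : planeRotation φ ^ k = planeRotation (k * φ) := by
  induction k with
  | zero => simp [planeRotation_zero]
  | succ k ih => rw [pow_succ, ih, planeRotation_mul]; congr 1; push_cast; ring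

lemma moAcc_planeRotation (φ : ℝ) (k : ℕ) :
    moAcc 1 (planeRotation φ) 1 {0} k = Real.cos (k * φ) ^ 2 := by
  have : (planeRotation (k * φ) *ᵥ qInit 2) 0 = (Real.cos (k * φ) : ℂ) := by
    simp [mulVec, dotProduct, planeRotation, qInit]
  rw [moAcc, Finset.sum_singleton, planeRotation_pow, one_mul, mul_one, this,
    Complex.norm_real, Real.norm_eq_abs, sq_abs]

lemma cos_sq_nat_mod_mul_pi_div (p k : ℕ) :
    Real.cos ((k % p : ℕ) * (Real.pi / p)) ^ 2 = Real.cos (k * (Real.pi / p)) ^ 2 := by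
  rcases Nat.eq_zero_or_pos p with rfl | hp
  · simp
  refine Function.Periodic.map_mod_nat (f := fun m : ℕ => Real.cos (m * (Real.pi / p)) ^ 2)
    (fun m => ?_) k
  have : ((m + p : ℕ) : ℝ) * (Real.pi / p) = m * (Real.pi / p) + Real.pi := by
    push_cast; field_simp
  simp only [this, Real.cos_add_pi, neg_sq]

lemma two_thirds_le_cos_sq_pi_div {p : ℕ} (hp : 6 ≤ p) :
    2 / 3 ≤ Real.cos (Real.pi / p) ^ 2 := by
  have hle : Real.pi / p ≤ Real.pi / 6 :=
    div_le_div_of_nonneg_left Real.pi_pos.le (by norm_num) (by exact_mod_cast hp)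
  have hcos : Real.cos (Real.pi / 6) ≤ Real.cos (Real.pi / p) :=
    Real.cos_le_cos_of_nonneg_of_le_pi (by positivity) (by linarith [Real.pi_pos]) hle
  have hsix : Real.cos (Real.pi / 6) ^ 2 = 3 / 4 := by
    rw [Real.cos_pi_div_six, div_pow, Real.sq_sqrt (by norm_num)]; norm_num
  nlinarith [Real.cos_nonneg_of_neg_pi_div_two_le_of_le (x := Real.pi / 6)
    (by linarith [Real.pi_pos]) (by linarith [Real.pi_pos])]

lemma cos_sq_half_mul_pi_div_le {p : ℕ} (hp : 3 ≤ p) :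
    Real.cos ((p / 2 : ℕ) * (Real.pi / p)) ^ 2 ≤ 1 / 3 := by
  have hk : (2 * (p / 2 : ℕ) : ℝ) ≤ p ∧ (p : ℝ) ≤ 2 * (p / 2 : ℕ) + 1 := by
    constructor <;> norm_cast <;> omega
  set δ := Real.pi / 2 - (p / 2 : ℕ) * (Real.pi / p)
  have hδ : δ = Real.pi * (p - 2 * (p / 2 : ℕ)) / (2 * p) := by
    simp only [δ]; field_simp
  have hδ0 : 0 ≤ δ := by
    rw [hδ]; exact div_nonneg (mul_nonneg Real.pi_pos.le (by linarith)) (by positivity)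
  have hδ6 : δ ≤ Real.pi / 6 := by
    rw [hδ, div_le_div_iff₀ (by positivity) (by norm_num)]
    have h3 : (3 : ℝ) ≤ p := by exact_mod_cast hp
    nlinarith [Real.pi_pos]
  calc Real.cos ((p / 2 : ℕ) * (Real.pi / p)) ^ 2 = Real.sin δ ^ 2 := by
        rw [← Real.cos_pi_div_two_sub]; simp only [δ, sub_sub_cancel]
    _ ≤ δ ^ 2 := Real.sin_sq_le_sq
    _ ≤ 1 / 3 := by nlinarith [Real.pi_lt_d2]

lemma sum_norm_sq_eq_star_dotProduct {𝕜 ι : Type*} [RCLike 𝕜] [Fintype ι] (v : ι → 𝕜) :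
    ((∑ i, ‖v i‖ ^ 2 : ℝ) : 𝕜) = star v ⬝ᵥ v := by
  simp [dotProduct, RCLike.conj_mul]

lemma sum_norm_sq_mulVec_of_mem_unitaryGroup {𝕜 ι : Type*} [RCLike 𝕜] [Fintype ι]
    [DecidableEq ι] {U : Matrix ι ι 𝕜} (hU : U ∈ unitaryGroup ι 𝕜) (v : ι → 𝕜) :
    ∑ i, ‖(U *ᵥ v) i‖ ^ 2 = ∑ i, ‖v i‖ ^ 2 := by
  have h : star (U *ᵥ v) ⬝ᵥ (U *ᵥ v) = star v ⬝ᵥ v := by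
    rw [star_mulVec, dotProduct_mulVec, vecMul_vecMul, ← star_eq_conjTranspose,
      mem_unitaryGroup_iff'.mp hU, vecMul_one]
  rw [← sum_norm_sq_eq_star_dotProduct, ← sum_norm_sq_eq_star_dotProduct] at h
  exact_mod_cast h

lemma sum_norm_sq_qInit (n : ℕ) [NeZero n] : ∑ i, ‖qInit n i‖ ^ 2 = 1 := by
  simp [qInit, Fin.val_eq_zero_iff, apply_ite]

lemma moAcc_add_sum_compl {n : ℕ} [NeZero n] {Uc Ua Ud : Matrix (Fin n) (Fin n) ℂ}
    (hUc : Uc ∈ unitaryGroup (Fin n) ℂ) (hUa : Ua ∈ unitaryGroup (Fin n) ℂ)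
    (hUd : Ud ∈ unitaryGroup (Fin n) ℂ) (Qa : Finset (Fin n)) (k : ℕ) :
    moAcc Uc Ua Ud Qa k + ∑ i ∈ Qaᶜ, ‖((Ud * Ua ^ k * Uc) *ᵥ qInit n) i‖ ^ 2 = 1 := by
  rw [moAcc, Finset.sum_add_sum_compl, sum_norm_sq_mulVec_of_mem_unitaryGroup
    (mul_mem (mul_mem hUd (pow_mem hUa k)) hUc), sum_norm_sq_qInit]

lemma one_le_moAcc_iff {n : ℕ} [NeZero n] {Uc Ua Ud : Matrix (Fin n) (Fin n) ℂ}
    (hUc : Uc ∈ unitaryGroup (Fin n) ℂ) (hUa : Ua ∈ unitaryGroup (Fin n) ℂ)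
    (hUd : Ud ∈ unitaryGroup (Fin n) ℂ) (Qa : Finset (Fin n)) (k : ℕ) :
    1 ≤ moAcc Uc Ua Ud Qa k ↔ ∀ i ∉ Qa, ((Ud * Ua ^ k * Uc) *ᵥ qInit n) i = 0 := by
  have hsum := moAcc_add_sum_compl hUc hUa hUd Qa k
  have hnn : ∀ i ∈ Qaᶜ, 0 ≤ ‖((Ud * Ua ^ k * Uc) *ᵥ qInit n) i‖ ^ 2 :=
    fun _ _ => by positivity
  have hrej : 1 ≤ moAcc Uc Ua Ud Qa k ↔
      ∑ i ∈ Qaᶜ, ‖((Ud * Ua ^ k * Uc) *ᵥ qInit n) i‖ ^ 2 = 0 := by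
    constructor <;> intro <;> linarith [Finset.sum_nonneg hnn]
  rw [hrej, Finset.sum_eq_zero_iff_of_nonneg hnn]
  simp

section FiniteDimensional

variable {K V : Type*} [Field K] [AddCommGroup V] [Module K V] [FiniteDimensional K V]
  {L : Submodule K V} {f : Module.End K V} {x : V}

lemma pow_apply_mem_of_finrank_le_one (hL : finrank K L ≤ 1) (hx : x ∈ L) (hfx : f x ∈ L)
    (k : ℕ) : (f ^ k) x ∈ L := by
  rcases eq_or_ne x 0 with rfl | hx0
  · simp
  have hLx : K ∙ x = L := Submodule.eq_of_le_of_finrank_le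
    ((Submodule.span_singleton_le_iff_mem x L).2 hx) (by rwa [finrank_span_singleton hx0])
  obtain ⟨c, hc⟩ := Submodule.mem_span_singleton.1 (hLx ▸ hfx)
  have hpow : (f ^ k) x = c ^ k • x := by
    induction k with
    | zero => simp
    | succ k ih =>
      rw [pow_succ, Module.End.mul_apply, ← hc, map_smul, ih, smul_smul, pow_succ']
  rw [hpow]
  exact L.smul_mem _ hx

lemma pow_apply_mem_of_finrank_le_two (hV : finrank K V ≤ 2) (hx : x ∈ L) (hfx : f x ∈ L)
    (k : ℕ) : (f ^ k) x ∈ L := by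
  rcases eq_or_ne L ⊤ with rfl | hL
  · exact Submodule.mem_top
  exact pow_apply_mem_of_finrank_le_one (by have := Submodule.finrank_lt hL; omega) hx hfx k

end FiniteDimensional

lemma one_le_moAcc_of_one_le_moAcc_zero_of_one_le_moAcc_one
    {Uc Ua Ud : Matrix (Fin 2) (Fin 2) ℂ} (hUc : Uc ∈ unitaryGroup (Fin 2) ℂ)
    (hUa : Ua ∈ unitaryGroup (Fin 2) ℂ) (hUd : Ud ∈ unitaryGroup (Fin 2) ℂ)
    (Qa : Finset (Fin 2)) (h0 : 1 ≤ moAcc Uc Ua Ud Qa 0) (h1 : 1 ≤ moAcc Uc Ua Ud Qa 1)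
    (k : ℕ) : 1 ≤ moAcc Uc Ua Ud Qa k := by
  rw [one_le_moAcc_iff hUc hUa hUd] at h0 h1 ⊢
  intro j hj
  set L := LinearMap.ker ((LinearMap.proj j).comp (toLin' Ud))
  have hmem : ∀ m,
      (toLin' Ua ^ m) (Uc *ᵥ qInit 2) ∈ L ↔ ((Ud * Ua ^ m * Uc) *ᵥ qInit 2) j = 0 := by
    intro m
    rw [← toLin'_pow, ← mulVec_mulVec, ← mulVec_mulVec]
    rfl
  refine (hmem k).1 (pow_apply_mem_of_finrank_le_two (finrank_fin_fun ℂ).le ?_ ?_ k)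
  · simpa only [pow_zero, Module.End.one_apply] using (hmem 0).2 (h0 j hj)
  · simpa only [pow_one] using (hmem 1).2 (h1 j hj)

/-- for `p ≥ 6`, the promise problem `A(p)` can be solved with
error probability `1/3` by an MO-1QFA with two quantum basis states, but cannot
be solved exactly (error probability `0`) by any MO-1QFA with two quantum basis
states. -/
theorem two_state_qfa_solves_not_exactly (p : ℕ) (hp : 6 ≤ p) :
    MOSolves 2 (AyesP p) (AnoP p) (1 / 3) ∧
    ¬ MOSolves 2 (AyesP p) (AnoP p) 0 := by
  constructor
  · refine ⟨1, planeRotation (Real.pi / p), 1, one_mem _, planeRotation_mem_unitaryGroup _,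
      one_mem _, {0}, fun w hw => ?_, fun w hw => ?_⟩ <;>
    simp only [AyesP, AnoP, Set.mem_ofPred_eq, cos_sq_nat_mod_mul_pi_div] at hw <;>
    rw [moAcc_planeRotation] <;> linarith
  · rintro ⟨Uc, Ua, Ud, hUc, hUa, hUd, Qa, hyes, hno⟩
    have h0 : 1 ≤ moAcc Uc Ua Ud Qa 0 := by simpa using hyes [] (by norm_num [AyesP])
    have h1 : 1 ≤ moAcc Uc Ua Ud Qa 1 := by
      simpa using hyes [()] (by simpa [AyesP, Nat.mod_eq_of_lt (by omega : 1 < p)]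
        using two_thirds_le_cos_sq_pi_div hp)
    have hno_word := hno (List.replicate (p / 2) ()) (by
      simpa [AnoP, Nat.mod_eq_of_lt (by omega : p / 2 < p)] using
        cos_sq_half_mul_pi_div_le (by omega : 3 ≤ p))
    have := one_le_moAcc_of_one_le_moAcc_zero_of_one_le_moAcc_one hUc hUa hUd Qa h0 h1 (p / 2)
    simp only [List.length_replicate] at hno_word
    linarith
end
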